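/- For every ψ ∈ ℂ^V with ψ ≠ 0, the right-hand side of the dissipative nonlinear Schrödinger equation satisfies Re⟨F(ψ, w), ψ⟩ = 0; consequently, if ψ : ℝ → ℂ^V is differentiable, ψ(t) ≠ 0 for all t, and ψ′(t) = F(ψ(t), w) for all t, then ‖ψ(t)‖ = ‖ψ(0)‖ for all t (the norm of the solution is conserved, so the unit sphere S^{2|V|−1} ⊂ ℂ^V is invariant under the flow). -/

import Mathlib

open Finset

/-- The weighted graph Laplacian `(Δ(w)ψ)(v) = Σ_{u∈V} w(v,u) · (ψ(v) − ψ(u))`. -/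
noncomputable def lapW {V : Type*} [Fintype V] (w : V × V → ℝ) (ψ : V → ℂ) (v : V) : ℂ :=
  ∑ u, ((w (v, u) : ℝ) : ℂ) * (ψ v - ψ u)

/-- The standard inner product `⟨ψ, φ⟩ = Σ_{v∈V} ψ(v) · conj(φ(v))` on `ℂ^V`. -/
noncomputable def innC {V : Type*} [Fintype V] (ψ φ : V → ℂ) : ℂ :=
  ∑ v, ψ v * (starRingEnd ℂ) (φ v)

/-- The dissipation term `D(ψ, w)(v) = (Δ(w)ψ)(v) + (|ψ(v)|² − a(v)) · ψ(v)`. -/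
noncomputable def dissip {V : Type*} [Fintype V] (w : V × V → ℝ) (a : V → ℝ)
    (ψ : V → ℂ) (v : V) : ℂ :=
  lapW w ψ v + ((‖ψ v‖ ^ 2 - a v : ℝ) : ℂ) * ψ v

/-- The orthogonal projector `P_ψ^⊥ x = x − (⟨x, ψ⟩/‖ψ‖²)·ψ` (with `‖ψ‖² = ⟨ψ, ψ⟩`). -/
noncomputable def projPerp {V : Type*} [Fintype V] (ψ x : V → ℂ) : V → ℂ :=
  x - (innC x ψ / innC ψ ψ) • ψ

/-- The right-hand side `F(ψ, w) = −i·H(w)ψ − γ·P_ψ^⊥ D(ψ, w)` of the dissipative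
nonlinear Schrödinger equation, where `H(w)ψ = Δ(w)ψ + a·ψ`. -/
noncomputable def Fnls {V : Type*} [Fintype V] (w : V × V → ℝ) (a : V → ℝ) (γ : ℝ)
    (ψ : V → ℂ) : V → ℂ :=
  fun v => -Complex.I * (lapW w ψ v + ((a v : ℝ) : ℂ) * ψ v)
    - ((γ : ℝ) : ℂ) * projPerp ψ (dissip w a ψ) v

/-!
The dissipative term is projected orthogonally to `ψ`, so it contributes nothing to
`⟨F(ψ, w), ψ⟩`. The Hamiltonian part contributes `-i⟨H(w)ψ, ψ⟩`, which is purely imaginary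
because `H(w)` is self-adjoint for symmetric `w`: twice `⟨Δ(w)ψ, ψ⟩` is the Dirichlet form
`Σ_{v,u} w(v,u) |ψ(v) − ψ(u)|²`. Hence `d/dt ‖ψ(t)‖² = 2 Re⟨ψ′(t), ψ(t)⟩ = 0`.
-/

section

variable {V : Type*} [Fintype V]

lemma innC_add_left (x y ψ : V → ℂ) : innC (x + y) ψ = innC x ψ + innC y ψ := by
  simp only [innC, Pi.add_apply, add_mul, sum_add_distrib]

lemma innC_sub_left (x y ψ : V → ℂ) : innC (x - y) ψ = innC x ψ - innC y ψ := by
  simp only [innC, Pi.sub_apply, sub_mul, sum_sub_distrib]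

lemma innC_smul_left (c : ℂ) (x ψ : V → ℂ) : innC (c • x) ψ = c * innC x ψ := by
  simp only [innC, Pi.smul_apply, smul_eq_mul, mul_sum, mul_assoc]

lemma innC_self (ψ : V → ℂ) : innC ψ ψ = ((∑ v, ‖ψ v‖ ^ 2 : ℝ) : ℂ) := by
  push_cast
  simp only [innC, Complex.mul_conj']

lemma innC_self_ne_zero {ψ : V → ℂ} (hψ : ψ ≠ 0) : innC ψ ψ ≠ 0 := by
  rw [innC_self, Complex.ofReal_ne_zero]
  obtain ⟨v, hv⟩ := Function.ne_iff.mp hψ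
  exact (sum_pos' (fun _ _ => by positivity)
    ⟨v, mem_univ v, pow_pos (norm_pos_iff.mpr hv) 2⟩).ne'

lemma innC_projPerp_self (x : V → ℂ) {ψ : V → ℂ} (hψ : ψ ≠ 0) :
    innC (projPerp ψ x) ψ = 0 := by
  rw [projPerp, innC_sub_left, innC_smul_left, div_mul_cancel₀ _ (innC_self_ne_zero hψ),
    sub_self]

lemma two_mul_innC_lapW_self (w : V × V → ℝ) (hw : ∀ u v : V, w (u, v) = w (v, u))
    (ψ : V → ℂ) :
    2 * innC (lapW w ψ) ψ = ((∑ v, ∑ u, w (v, u) * ‖ψ v - ψ u‖ ^ 2 : ℝ) : ℂ) := by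
  have hexpand : innC (lapW w ψ) ψ
      = ∑ v, ∑ u, (w (v, u) : ℂ) * (ψ v - ψ u) * starRingEnd ℂ (ψ v) := by
    simp only [innC, lapW, sum_mul]
  have hswap : innC (lapW w ψ) ψ
      = ∑ v, ∑ u, (w (v, u) : ℂ) * (ψ u - ψ v) * starRingEnd ℂ (ψ u) := by
    rw [hexpand, sum_comm]
    simp only [hw]
  rw [two_mul]
  nth_rw 1 [hexpand]
  rw [hswap, ← sum_add_distrib]
  push_cast
  refine sum_congr rfl fun v _ => ?_
  rw [← sum_add_distrib]
  refine sum_congr rfl fun u _ => ?_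
  rw [← Complex.mul_conj', map_sub]
  ring

lemma innC_lapW_self_im (w : V × V → ℝ) (hw : ∀ u v : V, w (u, v) = w (v, u))
    (ψ : V → ℂ) : (innC (lapW w ψ) ψ).im = 0 := by
  have h := congrArg Complex.im (two_mul_innC_lapW_self w hw ψ)
  rw [Complex.ofReal_im] at h
  simpa using h

lemma innC_ofReal_mul_self_im (a : V → ℝ) (ψ : V → ℂ) :
    (innC (fun v => (a v : ℂ) * ψ v) ψ).im = 0 := by
  have h : innC (fun v => (a v : ℂ) * ψ v) ψ = ((∑ v, a v * ‖ψ v‖ ^ 2 : ℝ) : ℂ) := by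
    push_cast
    simp only [innC, mul_assoc, Complex.mul_conj']
  rw [h, Complex.ofReal_im]

lemma Fnls_eq (w : V × V → ℝ) (a : V → ℝ) (γ : ℝ) (ψ : V → ℂ) :
    Fnls w a γ ψ = -Complex.I • (lapW w ψ + fun v => (a v : ℂ) * ψ v)
      - (γ : ℂ) • projPerp ψ (dissip w a ψ) :=
  rfl

theorem re_innC_Fnls_self (w : V × V → ℝ) (hw : ∀ u v : V, w (u, v) = w (v, u))
    (a : V → ℝ) (γ : ℝ) {ψ : V → ℂ} (hψ : ψ ≠ 0) : (innC (Fnls w a γ ψ) ψ).re = 0 := by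
  rw [Fnls_eq, innC_sub_left, innC_smul_left, innC_smul_left, innC_projPerp_self _ hψ,
    innC_add_left]
  simp [innC_lapW_self_im w hw, innC_ofReal_mul_self_im]

lemma hasDerivAt_sum_norm_sq {ψ : ℝ → V → ℂ} {ψ' : V → ℂ} {t : ℝ}
    (h : HasDerivAt ψ ψ' t) :
    HasDerivAt (fun s => ∑ v, ‖ψ s v‖ ^ 2) (2 * (innC ψ' (ψ t)).re) t := by
  have hv : ∀ v, HasDerivAt (fun s => ‖ψ s v‖ ^ 2) (2 * inner ℝ (ψ t v) (ψ' v)) t :=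
    fun v => (hasDerivAt_pi.mp h v).norm_sq
  refine (HasDerivAt.fun_sum (u := univ) fun v _ => hv v).congr_deriv ?_
  simp only [innC, Complex.re_sum, Complex.inner, mul_sum]

theorem sum_norm_sq_eq_of_re_innC_self_eq_zero {F : (V → ℂ) → V → ℂ}
    (hF : ∀ φ : V → ℂ, φ ≠ 0 → (innC (F φ) φ).re = 0) {ψ : ℝ → V → ℂ}
    (hψ : ∀ t, ψ t ≠ 0) (hsol : ∀ t, HasDerivAt ψ (F (ψ t)) t) (t : ℝ) :
    ∑ v, ‖ψ t v‖ ^ 2 = ∑ v, ‖ψ 0 v‖ ^ 2 := by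
  have hderiv : ∀ s, HasDerivAt (fun s => ∑ v, ‖ψ s v‖ ^ 2) 0 s := fun s => by
    simpa [hF _ (hψ s)] using hasDerivAt_sum_norm_sq (hsol s)
  exact is_const_of_deriv_eq_zero (fun s => (hderiv s).differentiableAt)
    (fun s => (hderiv s).deriv) t 0

end

theorem nls_norm_conservation_general {V : Type*} [Fintype V]
    (w : V × V → ℝ) (hw : ∀ u v : V, w (u, v) = w (v, u))
    (a : V → ℝ) (γ : ℝ) :
    (∀ ψ : V → ℂ, ψ ≠ 0 → (innC (Fnls w a γ ψ) ψ).re = 0) ∧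
    (∀ ψ : ℝ → V → ℂ, (∀ t, ψ t ≠ 0) →
      (∀ t, HasDerivAt ψ (Fnls w a γ (ψ t)) t) →
      ∀ t, ∑ v, ‖ψ t v‖ ^ 2 = ∑ v, ‖ψ 0 v‖ ^ 2) :=
  ⟨fun _ hψ => re_innC_Fnls_self w hw a γ hψ,
    fun _ hψ hsol => sum_norm_sq_eq_of_re_innC_self_eq_zero
      (fun _ hφ => re_innC_Fnls_self w hw a γ hφ) hψ hsol⟩

/-- For every nonzero `ψ`, `Re⟨F(ψ, w), ψ⟩ = 0`; consequently every everywhere-nonzero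
differentiable solution of `ψ′ = F(ψ, w)` has conserved norm `‖ψ(t)‖ = ‖ψ(0)‖`, so the
unit sphere in `ℂ^V` is invariant under the flow. -/
theorem nls_norm_conservation {V : Type*} [Fintype V] [DecidableEq V] [Nonempty V]
    (w : V × V → ℝ) (hw : ∀ u v : V, w (u, v) = w (v, u)) (hw0 : ∀ v : V, w (v, v) = 0)
    (a : V → ℝ) (γ : ℝ) :
    (∀ ψ : V → ℂ, ψ ≠ 0 → (innC (Fnls w a γ ψ) ψ).re = 0) ∧
    (∀ ψ : ℝ → V → ℂ, (∀ t, ψ t ≠ 0) →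
      (∀ t, HasDerivAt ψ (Fnls w a γ (ψ t)) t) →
      ∀ t, ∑ v, ‖ψ t v‖ ^ 2 = ∑ v, ‖ψ 0 v‖ ^ 2) :=
  nls_norm_conservation_general w hw a γ
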